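/- Let n = 2m+1 with m ≥ 1 an integer. The matrices χ_{ν,i}, for ν = 0,…,n−1 and i = 0,…,i_ν, form a basis of the real vector space of all (m+1)×(m+1) real matrices. (Lemma 'basis', odd case.) -/

import Mathlib

open MeasureTheory Set

noncomputable section

/-- Lebesgue measure restricted to the interval (0,1). -/
def μ01 : Measure ℝ := volume.restrict (Set.Ioo 0 1)

/-- `f ∈ L¹(0,1)`. -/
def MemL1 (f : ℝ → ℂ) : Prop := MeasureTheory.IntegrableOn f (Set.Ioo 0 1)

/-- `f ∈ L²(0,1)`. -/
def MemL2 (f : ℝ → ℂ) : Prop := MeasureTheory.MemLp f 2 μ01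

/-- `f ∈ L^∞(0,1)`. -/
def MemLinf (f : ℝ → ℂ) : Prop := MeasureTheory.MemLp f ⊤ μ01

/-- The L¹(0,1) norm. -/
def L1norm (f : ℝ → ℂ) : ℝ := ∫ x in Set.Ioo (0:ℝ) 1, ‖f x‖

/-- The L²(0,1) norm. -/
def L2norm (f : ℝ → ℂ) : ℝ := (∫ x in Set.Ioo (0:ℝ) 1, ‖f x‖ ^ 2) ^ ((1:ℝ)/2)

/-- `g` is absolutely continuous on `[0,1]` with a.e. derivative `g'`
(in particular `g' ∈ L¹(0,1)`). -/
def HasACDerivOn01 (g g' : ℝ → ℂ) : Prop :=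
  MeasureTheory.IntegrableOn g' (Set.Ioo 0 1) ∧
  ∀ x ∈ Set.Icc (0:ℝ) 1, g x = g 0 + ∫ t in (0:ℝ)..x, g' t

/-- `Dy` is a chain of derivatives of `y` up to order `m`:
`Dy 0 = y` and `Dy k` is absolutely continuous on `[0,1]` with derivative `Dy (k+1)`
for `k < m`.  In particular `Dy m ∈ L¹(0,1)`, i.e. `y ∈ W¹_m[0,1]`. -/
def DerivChain (m : ℕ) (y : ℝ → ℂ) (Dy : ℕ → ℝ → ℂ) : Prop :=
  Dy 0 = y ∧ ∀ k < m, HasACDerivOn01 (Dy k) (Dy (k+1))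

/-- `h` is an `i`-th iterated a.e. derivative of `g` on `[0,1]`
(through absolutely continuous intermediate derivatives). -/
def IterDeriv (i : ℕ) (g h : ℝ → ℂ) : Prop :=
  ∃ G : ℕ → ℝ → ℂ, G 0 = g ∧ (∀ k < i, HasACDerivOn01 (G k) (G (k+1))) ∧ G i = h

/-- Test functions: smooth, compactly supported inside `(0,1)`. -/
def TestFun (z : ℝ → ℂ) : Prop :=
  ContDiff ℝ (⊤ : ℕ∞) z ∧ tsupport z ⊆ Set.Ioo 0 1

/-- The singularity orders `i_{2k+j} = m - k - j`. -/
def iOrd (m ν : ℕ) : ℕ := m - ν / 2 - ν % 2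

/-- The entries of the matrices `χ_{ν,i}` (size `(m+1) × (m+1)`, indices `0,…,m`). -/
def chiN (m ν i r c : ℕ) : ℝ :=
  if r ≤ m ∧ c ≤ m then
    if ν % 2 = 0 then
      if ν / 2 ≤ r ∧ ν / 2 ≤ c ∧ (r - ν / 2) + (c - ν / 2) = i then
        (Nat.choose i (r - ν / 2) : ℝ)
      else 0
    else
      if ν / 2 ≤ r ∧ ν / 2 ≤ c ∧ (r - ν / 2) + (c - ν / 2) = i + 1 then
        (Nat.choose (i+1) (r - ν / 2) : ℝ)
          - 2 * (if r - ν / 2 = 0 then 0 else (Nat.choose i (r - ν / 2 - 1) : ℝ))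
      else 0
  else 0

/-- The matrix `χ_{ν,i}`. -/
def chiM (m ν i : ℕ) : Matrix (Fin (m+1)) (Fin (m+1)) ℝ :=
  Matrix.of fun r c => chiN m ν i (r : ℕ) (c : ℕ)

/-- The space `𝔔_n` for `n = 2m` (indices `0,…,m`; entries outside vanish). -/
def MemQE (m : ℕ) (Q : ℕ → ℕ → ℝ → ℂ) : Prop :=
  (∀ r j, r < m → j < m → MemL1 (Q r j)) ∧
  (∀ r, r < m → MemL2 (Q r m)) ∧
  (∀ r, r < m → MemL2 (Q m r)) ∧
  Q m m = 0 ∧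
  (∀ r j, m < r ∨ m < j → Q r j = 0)

/-- The space `𝔉_n` for `n = 2m` (paper indices `1,…,n`; entries outside vanish). -/
def MemFE (m : ℕ) (F : ℕ → ℕ → ℝ → ℂ) : Prop :=
  (∀ k j, 1 ≤ k → k ≤ 2*m → 1 ≤ j → j ≤ 2*m → MemL1 (F k j)) ∧
  (∀ j, 1 ≤ j → j ≤ m → MemL2 (F m j)) ∧
  (∀ k, m+1 ≤ k → k ≤ 2*m → MemL2 (F k (m+1))) ∧
  (∀ k j, 1 ≤ k → k ≤ 2*m → 1 ≤ j → j ≤ 2*m →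
    (k < m ∨ m+1 < j ∨ (k = m ∧ j = m+1)) → F k j = 0) ∧
  (∀ k j, ¬(1 ≤ k ∧ k ≤ 2*m ∧ 1 ≤ j ∧ j ≤ 2*m) → F k j = 0)

/-- The space `𝔔_n` for `n = 2m+1`. -/
def MemQO (m : ℕ) (Q : ℕ → ℕ → ℝ → ℂ) : Prop :=
  (∀ r j, r ≤ m → j ≤ m → MemL1 (Q r j)) ∧
  (∀ r j, m < r ∨ m < j → Q r j = 0)

/-- The space `𝔉_n` for `n = 2m+1` (paper indices `1,…,n`). -/
def MemFO (m : ℕ) (F : ℕ → ℕ → ℝ → ℂ) : Prop :=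
  (∀ k j, m+1 ≤ k → k ≤ 2*m+1 → 1 ≤ j → j ≤ m+1 → MemL1 (F k j)) ∧
  (∀ k j, 1 ≤ k → k ≤ 2*m+1 → 1 ≤ j → j ≤ 2*m+1 → (k ≤ m ∨ m+1 < j) → F k j = 0) ∧
  (∀ k j, ¬(1 ≤ k ∧ k ≤ 2*m+1 ∧ 1 ≤ j ∧ j ≤ 2*m+1) → F k j = 0)

/-- The map `𝒮_n`, `n = 2m` (paper indices). -/
def SE (m : ℕ) (Q : ℕ → ℕ → ℝ → ℂ) : ℕ → ℕ → ℝ → ℂ := fun k j =>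
  if k = m ∧ 1 ≤ j ∧ j ≤ m then fun x => (-1:ℂ)^(m+1) * Q (j-1) m x
  else if m+1 ≤ k ∧ k ≤ 2*m ∧ j = m+1 then fun x => (-1:ℂ)^(k+1) * Q m (2*m-k) x
  else if m+1 ≤ k ∧ k ≤ 2*m ∧ 1 ≤ j ∧ j ≤ m then
    fun x => (-1:ℂ)^(k+1) * Q (j-1) (2*m-k) x + (-1:ℂ)^(m+k) * (Q (j-1) m x * Q m (2*m-k) x)
  else 0

/-- The map `𝒮_n⁻¹`, `n = 2m` (indices `0,…,m`). -/
def SinvE (m : ℕ) (F : ℕ → ℕ → ℝ → ℂ) : ℕ → ℕ → ℝ → ℂ := fun r c =>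
  if r < m ∧ c = m then fun x => (-1:ℂ)^(m+1) * F m (r+1) x
  else if r = m ∧ c < m then fun x => (-1:ℂ)^(2*m-c+1) * F (2*m-c) (m+1) x
  else if r < m ∧ c < m then
    fun x => (-1:ℂ)^(2*m-c+1) * (F (2*m-c) (r+1) x - F (2*m-c) (m+1) x * F m (r+1) x)
  else 0

/-- The map `𝒮_n`, `n = 2m+1` (paper indices). -/
def SO (m : ℕ) (Q : ℕ → ℕ → ℝ → ℂ) : ℕ → ℕ → ℝ → ℂ := fun k j =>
  if m+1 ≤ k ∧ k ≤ 2*m+1 ∧ 1 ≤ j ∧ j ≤ m+1 then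
    fun x => (-1:ℂ)^k * Q (j-1) (2*m+1-k) x
  else 0

/-- Quasi-derivative chain generated by the matrix `F` (paper indices `1,…,n`):
`Y k = y^{[k]}`, i.e. `Y 0 = y` and for `1 ≤ k ≤ n` the function `y^{[k-1]} = Y (k-1)`
is absolutely continuous on `[0,1]` with a.e. derivative
`Y k + ∑_{j=1}^k F k j • Y (j-1)`. -/
def QuasiChain (n : ℕ) (F : ℕ → ℕ → ℝ → ℂ) (y : ℝ → ℂ) (Y : ℕ → ℝ → ℂ) : Prop :=
  Y 0 = y ∧ ∀ k, 1 ≤ k → k ≤ n → HasACDerivOn01 (Y (k-1))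
    (fun x => Y k x + ∑ j ∈ Finset.Icc 1 k, F k j x * Y (j-1) x)

/-- Membership in the domain `𝒟_F`. -/
def MemD (n : ℕ) (F : ℕ → ℕ → ℝ → ℂ) (y : ℝ → ℂ) : Prop :=
  ∃ Y : ℕ → ℝ → ℂ, QuasiChain n F y Y


section ChiBasisAux

lemma chiN_zero_row (m ν i r c : ℕ) (h : r < ν/2) : chiN m ν i r c = 0 := by
  unfold chiN; split_ifs <;> first | rfl | (exfalso; omega)

lemma chiN_zero_col (m ν i r c : ℕ) (h : c < ν/2) : chiN m ν i r c = 0 := by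
  unfold chiN; split_ifs <;> first | rfl | (exfalso; omega)

lemma chiN_zero_antidiag (m ν i r c : ℕ) (h : r + c ≠ i + 2*(ν/2) + ν%2) :
    chiN m ν i r c = 0 := by
  unfold chiN; split_ifs <;> first | rfl | (exfalso; omega)

lemma chiN_even_symm (m ν i r c : ℕ) (hν : ν % 2 = 0) :
    chiN m ν i r c = chiN m ν i c r := by
  unfold chiN
  split_ifs <;> first
    | rfl
    | (exfalso; omega)
    | (norm_cast
       rename_i h1 h2 h3 _
       rw [← Nat.choose_symm (show r - ν/2 ≤ i by omega)]
       congr 1; omega)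

lemma chiN_key (i a b : ℕ) (hab : a + b = i + 1) (ha : 1 ≤ a) (hb : 1 ≤ b) :
    (((i+1).choose a : ℝ)) - 2*(i.choose (a-1)) + (((i+1).choose b : ℝ) - 2*(i.choose (b-1))) = 0 := by
  obtain ⟨a', rfl⟩ : ∃ a', a = a' + 1 := ⟨a - 1, by omega⟩
  obtain ⟨b', rfl⟩ : ∃ b', b = b' + 1 := ⟨b - 1, by omega⟩
  have hi : i = a' + b' + 1 := by omega
  subst hi
  have e1 : (a' + b' + 1 + 1).choose (a' + 1) = (a'+b'+1).choose a' + (a'+b'+1).choose (a'+1) :=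
    Nat.choose_succ_succ _ _
  have e2 : (a' + b' + 1 + 1).choose (b' + 1) = (a'+b'+1).choose b' + (a'+b'+1).choose (b'+1) :=
    Nat.choose_succ_succ _ _
  have e3 : (a'+b'+1).choose (b'+1) = (a'+b'+1).choose a' := by
    rw [← Nat.choose_symm (by omega : a' ≤ a'+b'+1)]; congr 1; omega
  have e4 : (a'+b'+1).choose (a'+1) = (a'+b'+1).choose b' := by
    rw [← Nat.choose_symm (by omega : b' ≤ a'+b'+1)]; congr 1; omega
  rw [e1, e2, e3, e4]
  push_cast
  ring

lemma chiN_odd_antisym (m ν i r c : ℕ) (hν : ν % 2 = 1) :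
    chiN m ν i r c + chiN m ν i c r = 0 := by
  unfold chiN
  have hne : ¬ (ν % 2 = 0) := by omega
  split_ifs with h1 h2 h3 h4 h5 h6 h7 h8 <;>
    first
    | (simp; done)
    | (exfalso; omega)
    | skip
  · have hb : c - ν/2 = i + 1 := by omega
    rw [h3, hb]
    simp [Nat.choose_self]
    norm_num
  · have ha : r - ν/2 = i + 1 := by omega
    rename_i hc0
    rw [ha, hc0]
    simp [Nat.choose_self]
    norm_num
  · exact chiN_key i (r - ν/2) (c - ν/2) (by omega) (by omega) (by omega)

lemma chiN_diag_even (m ν i : ℕ) (hν : ν % 2 = 0) (h2 : ν/2 + i ≤ m) :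
    chiN m ν i (ν/2) (ν/2 + i) = 1 := by
  unfold chiN
  rw [if_pos (by omega : ν/2 ≤ m ∧ ν/2 + i ≤ m), if_pos hν,
    if_pos (by omega : ν/2 ≤ ν/2 ∧ ν/2 ≤ ν/2 + i ∧ (ν/2 - ν/2) + (ν/2 + i - ν/2) = i)]
  simp

lemma chiN_diag_odd (m ν i : ℕ) (hν : ν % 2 = 1) (h2 : ν/2 + i + 1 ≤ m) :
    chiN m ν i (ν/2) (ν/2 + i + 1) = 1 := by
  unfold chiN
  rw [if_pos (by omega : ν/2 ≤ m ∧ ν/2 + i + 1 ≤ m), if_neg (by omega : ¬ (ν % 2 = 0)),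
    if_pos (by omega : ν/2 ≤ ν/2 ∧ ν/2 ≤ ν/2 + i + 1 ∧ (ν/2 - ν/2) + (ν/2 + i + 1 - ν/2) = i + 1)]
  simp

lemma sum_iOrd (m : ℕ) : ∑ ν ∈ Finset.range (2*m+1), (iOrd m ν + 1) = (m+1)*(m+1) := by
  induction m with
  | zero => simp [iOrd]
  | succ n ih =>
    have h2 : 2*(n+1)+1 = (2*n+1) + 1 + 1 := by ring
    rw [h2, Finset.sum_range_succ, Finset.sum_range_succ]
    have e : ∀ ν ∈ Finset.range (2*n+1), iOrd (n+1) ν + 1 = (iOrd n ν + 1) + 1 := by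
      intro ν hν
      simp only [Finset.mem_range] at hν
      unfold iOrd
      omega
    rw [Finset.sum_congr rfl e, Finset.sum_add_distrib, ih]
    have b1 : iOrd (n+1) (2*n+1) = 0 := by unfold iOrd; omega
    have b2 : iOrd (n+1) (2*n+1+1) = 0 := by unfold iOrd; omega
    rw [b1, b2]
    simp [Finset.sum_const, Finset.card_range]
    ring

end ChiBasisAux

/-- Lemma `basis`, odd case: for `n = 2m+1`, the matrices `χ_{ν,i}`, `ν = 0,…,n-1`,
`i = 0,…,i_ν`, form a basis of the space of all `(m+1) × (m+1)` real matrices. -/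
theorem chi_basis_odd (m : ℕ) (hm : 1 ≤ m) :
    LinearIndependent ℝ
      (fun p : Σ ν : Fin (2*m+1), Fin (iOrd m (ν : ℕ) + 1) =>
        chiM m (p.1 : ℕ) (p.2 : ℕ)) ∧
    Submodule.span ℝ
      (Set.range fun p : Σ ν : Fin (2*m+1), Fin (iOrd m (ν : ℕ) + 1) =>
        chiM m (p.1 : ℕ) (p.2 : ℕ)) = ⊤ := by
  classical
  set ι := (Σ ν : Fin (2*m+1), Fin (iOrd m (ν : ℕ) + 1)) with hι
  have hli : LinearIndependent ℝ
      (fun p : ι => chiM m (p.1 : ℕ) (p.2 : ℕ)) := by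
    rw [Fintype.linearIndependent_iff]
    intro g hg
    have hE : ∀ r c : ℕ, r ≤ m → c ≤ m →
        ∑ p : ι, g p * chiN m (p.1 : ℕ) (p.2 : ℕ) r c = 0 := by
      intro r c hr hc
      have h0 := congrFun (congrFun hg ⟨r, by omega⟩) ⟨c, by omega⟩
      simpa [Matrix.sum_apply, Matrix.smul_apply, chiM, Matrix.of_apply, smul_eq_mul] using h0
    suffices H : ∀ ν : ℕ, ∀ p : ι, ((p.1 : ℕ) = ν) → g p = 0 by
      intro p; exact H _ p rfl
    intro ν
    induction ν using Nat.strong_induction_on with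
    | _ ν IH =>
      rintro ⟨⟨ν₀, hb⟩, ⟨i, hi⟩⟩ hp
      simp only at hp
      subst hp
      have hi' : i ≤ m - ν₀/2 - ν₀%2 := by
        have h' := hi
        simp only [iOrd, Fin.val_mk] at h'
        omega
      have hbig : ν₀/2 + i + ν₀%2 ≤ m := by omega
      rcases Nat.mod_two_eq_zero_or_one ν₀ with hj | hj
      · -- even case
        have h1 := hE (ν₀/2) (ν₀/2 + i) (by omega) (by omega)
        have h2 := hE (ν₀/2 + i) (ν₀/2) (by omega) (by omega)
        have hsum : ∑ p : ι, g p * (chiN m (p.1 : ℕ) (p.2 : ℕ) (ν₀/2) (ν₀/2+i)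
            + chiN m (p.1 : ℕ) (p.2 : ℕ) (ν₀/2+i) (ν₀/2)) = 0 := by
          simp only [mul_add, Finset.sum_add_distrib, h1, h2, add_zero]
        rw [Finset.sum_eq_single (⟨⟨ν₀, hb⟩, ⟨i, hi⟩⟩ : ι)] at hsum
        · have e1 : chiN m ν₀ i (ν₀/2) (ν₀/2+i) = 1 := chiN_diag_even m ν₀ i hj (by omega)
          have e2 : chiN m ν₀ i (ν₀/2+i) (ν₀/2) = 1 := by
            rw [← chiN_even_symm m ν₀ i (ν₀/2) (ν₀/2+i) hj]; exact e1
          simp only [e1, e2] at hsum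
          linarith
        · rintro ⟨⟨ν', hb'⟩, ⟨i', hic'⟩⟩ - hq
          by_cases hlt : ν' < ν₀
          · rw [IH ν' hlt _ rfl]; ring
          · have hzero : chiN m ν' i' (ν₀/2) (ν₀/2+i) + chiN m ν' i' (ν₀/2+i) (ν₀/2) = 0 := by
              rcases Nat.mod_two_eq_zero_or_one ν' with hj' | hj'
              · by_cases hee : ν' = ν₀
                · subst hee
                  have hii : i' ≠ i := by
                    intro h; subst h; exact hq rfl
                  rw [chiN_zero_antidiag m ν' i' _ _ (by omega),
                    chiN_zero_antidiag m ν' i' _ _ (by omega)]; ring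
                · have hk : ν₀/2 < ν'/2 := by omega
                  rw [chiN_zero_row m ν' i' _ _ hk, chiN_zero_col m ν' i' _ _ hk]; ring
              · exact chiN_odd_antisym m ν' i' _ _ hj'
            simp only []
            rw [hzero, mul_zero]
        · intro h; exact absurd (Finset.mem_univ _) h
      · -- odd case
        have h1 := hE (ν₀/2) (ν₀/2 + i + 1) (by omega) (by omega)
        have h2 := hE (ν₀/2 + i + 1) (ν₀/2) (by omega) (by omega)
        have hsum : ∑ p : ι, g p * (chiN m (p.1 : ℕ) (p.2 : ℕ) (ν₀/2) (ν₀/2+i+1)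
            - chiN m (p.1 : ℕ) (p.2 : ℕ) (ν₀/2+i+1) (ν₀/2)) = 0 := by
          simp only [mul_sub, Finset.sum_sub_distrib, h1, h2, sub_zero]
        rw [Finset.sum_eq_single (⟨⟨ν₀, hb⟩, ⟨i, hi⟩⟩ : ι)] at hsum
        · have e1 : chiN m ν₀ i (ν₀/2) (ν₀/2+i+1) = 1 := chiN_diag_odd m ν₀ i hj (by omega)
          have e2 : chiN m ν₀ i (ν₀/2+i+1) (ν₀/2) = -1 := by
            have := chiN_odd_antisym m ν₀ i (ν₀/2) (ν₀/2+i+1) hj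
            linarith
          simp only [e1, e2] at hsum
          linarith
        · rintro ⟨⟨ν', hb'⟩, ⟨i', hic'⟩⟩ - hq
          by_cases hlt : ν' < ν₀
          · rw [IH ν' hlt _ rfl]; ring
          · have hzero : chiN m ν' i' (ν₀/2) (ν₀/2+i+1) - chiN m ν' i' (ν₀/2+i+1) (ν₀/2) = 0 := by
              rcases Nat.mod_two_eq_zero_or_one ν' with hj' | hj'
              · rw [chiN_even_symm m ν' i' (ν₀/2) (ν₀/2+i+1) hj']; ring
              · by_cases hee : ν' = ν₀
                · subst hee
                  have hii : i' ≠ i := by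
                    intro h; subst h; exact hq rfl
                  rw [chiN_zero_antidiag m ν' i' _ _ (by omega),
                    chiN_zero_antidiag m ν' i' _ _ (by omega)]; ring
                · have hk : ν₀/2 < ν'/2 := by omega
                  rw [chiN_zero_row m ν' i' _ _ hk, chiN_zero_col m ν' i' _ _ hk]; ring
            simp only []
            rw [hzero, mul_zero]
        · intro h; exact absurd (Finset.mem_univ _) h
  have hne : Nonempty ι := ⟨⟨⟨0, by omega⟩, ⟨0, by omega⟩⟩⟩
  refine ⟨hli, hli.span_eq_top_of_card_eq_finrank ?_⟩
  rw [Fintype.card_sigma, Module.finrank_matrix]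
  simp only [Fintype.card_fin, Module.finrank_self, mul_one]
  rw [Fin.sum_univ_eq_sum_range (fun ν => iOrd m ν + 1)]
  exact sum_iOrd m
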